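/- arXiv:1409.3756 — 5 statements merged into one kernel-verified Lean document; each statement's English description precedes it below -/
import Mathlib

section
/- Let G be a finite group and φ an endomorphism of G. Then G is the internal semidirect product of nil(φ) (normal) and per(φ): that is, nil(φ) ∩ per(φ) = {1} and nil(φ) · per(φ) = G. -/
/-!
Some power `e = φ ^ n` (`n ≥ 1`) of `φ` is idempotent, because the powers of an element of the
finite monoid `Monoid.End G` are eventually periodic. Then every `g` factors as
`(g * (e g)⁻¹) * e g`, where `e` kills the first factor and fixes the second. Conversely, a point
that is both periodic and killed by some power of `φ` is killed by a multiple of its period.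
-/

open Function

theorem exists_isIdempotentElem_pow {M : Type*} [Monoid M] [Finite M] (a : M) :
    ∃ n, 0 < n ∧ IsIdempotentElem (a ^ n) := by
  obtain ⟨i, j, hij, h⟩ := Finite.exists_ne_map_eq_of_infinite (a ^ · : ℕ → M)
  wlog hlt : i < j generalizing i j
  · exact this j i hij.symm h.symm (by omega)
  have hper : IsPeriodicPt (a * ·) (j - i) (a ^ i) := by
    rw [IsPeriodicPt, IsFixedPt, mul_left_iterate_apply, ← pow_add, Nat.sub_add_cancel hlt.le]
    exact h.symm
  -- `n` is a multiple of the period `j - i` lying past the preperiod `i`.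
  set n := (j - i) * (i + 1)
  have hn : i < n := Nat.le_mul_of_pos_left (i + 1) (Nat.sub_pos_of_lt hlt)
  have hper_n := ((hper.mul_const (i + 1)).apply_iterate (n - i)).eq
  simp only [mul_left_iterate_apply] at hper_n
  rw [← pow_add, Nat.sub_add_cancel hn.le] at hper_n
  exact ⟨n, by omega, hper_n⟩

namespace Monoid.End

theorem eq_one_of_pow_apply_eq_one_of_pow_apply_eq_self {M : Type*} [Monoid M]
    (φ : Monoid.End M) {g : M} {k j : ℕ} (hk : (φ ^ k) g = 1) (hj : 0 < j)
    (hg : (φ ^ j) g = g) : g = 1 := by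
  rw [coe_pow] at hk hg
  have hkj : k ≤ k * j := Nat.le_mul_of_pos_right k hj
  calc g = φ^[k * j] g := ((show IsPeriodicPt φ j g from hg).const_mul k).eq.symm
    _ = φ^[k * j - k] (φ^[k] g) := by rw [← iterate_add_apply, Nat.sub_add_cancel hkj]
    _ = 1 := by rw [hk, iterate_map_one]

end Monoid.End

theorem IsIdempotentElem.monoidEnd_apply_apply {M : Type*} [Monoid M] {e : Monoid.End M}
    (he : IsIdempotentElem e) (g : M) : e (e g) = e g :=
  DFunLike.congr_fun he g

theorem IsIdempotentElem.monoidEnd_apply_mul_inv_apply {G : Type*} [Group G] {e : Monoid.End G}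
    (he : IsIdempotentElem e) (g : G) : e (g * (e g)⁻¹) = 1 := by
  rw [map_mul, map_inv, he.monoidEnd_apply_apply, mul_inv_cancel]

theorem fitting_semidirect_decomposition (G : Type*) [Group G] [Finite G]
    (φ : Monoid.End G) :
    (∀ g : G, (∃ n ≥ 1, (φ ^ n) g = 1) → (∃ n ≥ 1, (φ ^ n) g = g) → g = 1) ∧
    (∀ g : G, ∃ x y : G, (∃ n ≥ 1, (φ ^ n) x = 1) ∧ (∃ n ≥ 1, (φ ^ n) y = y) ∧
      g = x * y) := by
  refine ⟨fun g ⟨k, _, hk⟩ ⟨j, hj, hg⟩ =>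
    Monoid.End.eq_one_of_pow_apply_eq_one_of_pow_apply_eq_self φ hk hj hg, fun g => ?_⟩
  have : Finite (Monoid.End G) := Finite.of_injective _ DFunLike.coe_injective
  obtain ⟨n, hn, he⟩ := exists_isIdempotentElem_pow φ
  exact ⟨g * ((φ ^ n) g)⁻¹, (φ ^ n) g, ⟨n, hn, he.monoidEnd_apply_mul_inv_apply g⟩,
    ⟨n, hn, he.monoidEnd_apply_apply g⟩, by group⟩
end

section
/- Let G be a finite group and φ an endomorphism of G. If g ∈ G is transient (not periodic) with height h (the least h ≥ 1 such that φ^h(g) is periodic), then every element y with φ^k(y) = g for some k has height h + k, and the set of elements in the iterated preimages of g of heights h, h+1, …, h+n is in bijection with the disjoint union of the cosets φ^k(w)·ker^(n−k)(φ), k = 0,…,n, where w is any fixed element with φ^n(w) = g and height h + n; moreover these cosets are pairwise disjoint. -/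
/-- `g` is a periodic point of the endomorphism `φ`. -/
def IsPerPt {G : Type*} [Group G] (φ : Monoid.End G) (g : G) : Prop :=
  ∃ n ≥ 1, (φ ^ n) g = g

/-- `g` is transient with height exactly `h`: `φ^h g` is periodic and no earlier
iterate (including `g` itself, for `h ≥ 1`) is periodic. -/
def HeightEq {G : Type*} [Group G] (φ : Monoid.End G) (g : G) (h : ℕ) : Prop :=
  IsPerPt φ ((φ ^ h) g) ∧ ∀ h' < h, ¬ IsPerPt φ ((φ ^ h') g)

private lemma pow_apply_apply {G : Type*} [Group G] (φ : Monoid.End G) (a b : ℕ) (y : G) :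
    (φ ^ a) ((φ ^ b) y) = (φ ^ (a + b)) y := by
  rw [pow_add]; rfl

private lemma isPerPt_map {G : Type*} [Group G] (φ : Monoid.End G) (x : G) (j : ℕ)
    (hx : IsPerPt φ x) : IsPerPt φ ((φ ^ j) x) := by
  obtain ⟨m, hm, hmx⟩ := hx
  exact ⟨m, hm, by rw [pow_apply_apply, add_comm, ← pow_apply_apply, hmx]⟩

private lemma heightEq_unique {G : Type*} [Group G] (φ : Monoid.End G) (y : G) {a b : ℕ}
    (ha : HeightEq φ y a) (hb : HeightEq φ y b) : a = b := by
  rcases lt_trichotomy a b with hab | hab | hab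
  · exact absurd ha.1 (hb.2 a hab)
  · exact hab
  · exact absurd hb.1 (ha.2 b hab)

theorem preimage_heights_and_coset_decomposition (G : Type*) [Group G] [Finite G]
    (φ : Monoid.End G) (g : G) (h n : ℕ) (hh : 1 ≤ h) (hg : HeightEq φ g h)
    (w : G) (hw : (φ ^ n) w = g) (hwht : HeightEq φ w (h + n)) :
    (∀ (y : G) (k : ℕ), (φ ^ k) y = g → HeightEq φ y (h + k)) ∧
    (∀ y : G, (∃ j ≤ n, (φ ^ j) y = g) →
      ∃! p : ℕ × G, p.1 ≤ n ∧ (φ ^ (n - p.1)) p.2 = 1 ∧ y = (φ ^ p.1) w * p.2) ∧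
    (∀ k ≤ n, ∀ x : G, (φ ^ (n - k)) x = 1 →
      ∃ j ≤ n, (φ ^ j) ((φ ^ k) w * x) = g) := by
  have hgnp : ¬ IsPerPt φ g := by
    have := hg.2 0 hh
    simpa using this
  have key : ∀ (y : G) (k : ℕ), (φ ^ k) y = g → HeightEq φ y (h + k) := by
    intro y k hy
    constructor
    · rw [show h + k = h + k from rfl, ← pow_apply_apply, hy]
      exact hg.1
    · intro h' hh' hper
      rcases lt_or_ge h' k with hlt | hge
      · apply hgnp
        have := isPerPt_map φ _ (k - h') hper
        rwa [pow_apply_apply, Nat.sub_add_cancel hlt.le, hy] at this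
      · have he : (φ ^ h') y = (φ ^ (h' - k)) g := by
          rw [← hy, pow_apply_apply, Nat.sub_add_cancel hge]
        rw [he] at hper
        exact hg.2 (h' - k) (by omega) hper
  refine ⟨key, ?_, ?_⟩
  · rintro y ⟨j, hj, hjy⟩
    refine ⟨(n - j, ((φ ^ (n - j)) w)⁻¹ * y), ⟨Nat.sub_le n j, ?_, by group⟩, ?_⟩
    · rw [Nat.sub_sub_self hj, map_mul, map_inv, pow_apply_apply,
        Nat.add_sub_cancel' hj, hw, hjy, inv_mul_cancel]
    · rintro ⟨k, x⟩ ⟨hk, hx1, hx2⟩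
      have hky : (φ ^ (n - k)) y = g := by
        rw [hx2, map_mul, hx1, mul_one, pow_apply_apply, Nat.sub_add_cancel hk, hw]
      have h1 := key y (n - k) hky
      have h2 := key y (n - (n - j)) (by rw [Nat.sub_sub_self hj, hjy])
      have := heightEq_unique φ y h1 h2
      have hkj : k = n - j := by omega
      subst hkj
      simp only [Prod.mk.injEq, true_and]
      rw [hx2]; group
  · intro k hk x hx
    refine ⟨n - k, Nat.sub_le n k, ?_⟩
    rw [map_mul, hx, mul_one, pow_apply_apply, Nat.sub_add_cancel hk, hw]
end

section
/- Let G be a finite group, φ an endomorphism of G, and v ∈ G an element admitting an element w with φ^n(w) = v such that w has exactly n more 'height' than v (i.e., w lies in the n-th iterated preimage of v and is of maximal depth). Then for each k with 0 ≤ k ≤ n−1, the map x ↦ φ^{n−1}(w)·x is a bijection from the set of φ-preimages x of 1 that admit a chain of k further iterated preimages, onto the set of φ-preimages of v that admit a chain of k further iterated preimages. -/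
theorem rigid_procreation (G : Type*) [Group G] [Finite G] (φ : Monoid.End G)
    (v : G) (h n : ℕ) (hh : 1 ≤ h) (hn : 1 ≤ n) (hv : HeightEq φ v h)
    (w : G) (hw : (φ ^ n) w = v) (hwht : HeightEq φ w (h + n))
    (k : ℕ) (hk : k ≤ n - 1) :
    Set.BijOn (fun x => (φ ^ (n - 1)) w * x)
      {x : G | φ x = 1 ∧ ∃ z : G, (φ ^ k) z = x}
      {y : G | φ y = v ∧ ∃ z : G, (φ ^ k) z = y} := by
  have key : ∀ x : G, (φ ^ k) ((φ ^ (n - 1 - k)) x) = (φ ^ (n - 1)) x := by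
    intro x
    simp only [Monoid.End.coe_pow, ← Function.iterate_add_apply]
    congr 2
    omega
  have hφu : φ ((φ ^ (n - 1)) w) = v := by
    rw [← hw]
    have : φ ((φ ^ (n - 1)) w) = (φ ^ (1 + (n - 1))) w := by
      simp only [Monoid.End.coe_pow, Function.iterate_add_apply, Function.iterate_one]
    rw [this]
    congr 2
    omega
  refine ⟨?_, ?_, ?_⟩
  · rintro x ⟨hx1, z, hz⟩
    refine ⟨by simp only [map_mul, hx1, hφu, mul_one], (φ ^ (n - 1 - k)) w * z, ?_⟩
    rw [map_mul, key, hz]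
  · intro a _ b _ hab
    exact mul_left_cancel hab
  · rintro y ⟨hy1, z, hz⟩
    refine ⟨((φ ^ (n - 1)) w)⁻¹ * y, ⟨?_, ((φ ^ (n - 1 - k)) w)⁻¹ * z, ?_⟩, by simp⟩
    · rw [map_mul, map_inv, hφu, hy1, inv_mul_cancel]
    · rw [map_mul, map_inv, key, hz]
end

section
/- Let G be a finite group and φ an endomorphism of G. Define a_k = [ker^(k)(φ) : ker^(k−1)(φ)]. Then for all positive integers n ≤ m, a_m divides a_n. -/
/-!
Since `ker φ^(k+1)` is the preimage of `ker φ^k` under `φ`, it suffices to show `a_(k+2) ∣ a_(k+1)`, i.e.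
that pulling back subgroups `H, K` along a homomorphism `f` can only shrink `[K : H ∩ K]` to a divisor
when `H` is normal: `[f⁻¹K : f⁻¹H ∩ f⁻¹K]` equals `[(K ∩ range f) H : H]`, a divisor of `[K H : H]`
by Lagrange's theorem in `K H / H`.
-/

/-- The index `a_k = [ker^(k)(φ) : ker^(k-1)(φ)]` of consecutive iterated kernels. -/
noncomputable def kerIdx {G : Type*} [Group G] (φ : Monoid.End G) (k : ℕ) : ℕ :=
  (MonoidHom.ker (φ ^ (k - 1))).relIndex (MonoidHom.ker (φ ^ k))

namespace Subgroup

variable {G G' : Type*} [Group G] [Group G']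

theorem relIndex_dvd_of_le_right {H K L : Subgroup G} [H.Normal] (hKL : K ≤ L) :
    H.relIndex K ∣ H.relIndex L := by
  rw [← relIndex_sup_right K H, ← relIndex_sup_right L H]
  exact Dvd.intro _ (relIndex_mul_relIndex _ _ _ le_sup_right (sup_le_sup_right hKL H))

theorem relIndex_comap_comap_dvd (f : G →* G') (H K : Subgroup G') [H.Normal] :
    (H.comap f).relIndex (K.comap f) ∣ H.relIndex K := by
  rw [relIndex_comap]
  exact relIndex_dvd_of_le_right (map_comap_le f K)

end Subgroup

theorem Monoid.End.ker_pow_succ {G : Type*} [Group G] (φ : Monoid.End G) (k : ℕ) :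
    MonoidHom.ker (φ ^ (k + 1)) = (MonoidHom.ker (φ ^ k)).comap φ := by
  rw [pow_succ]
  rfl

theorem kerIdx_succ_succ_dvd {G : Type*} [Group G] (φ : Monoid.End G) (k : ℕ) :
    kerIdx φ (k + 2) ∣ kerIdx φ (k + 1) := by
  have h := Subgroup.relIndex_comap_comap_dvd φ (MonoidHom.ker (φ ^ k)) (MonoidHom.ker (φ ^ (k + 1)))
  rwa [← Monoid.End.ker_pow_succ, ← Monoid.End.ker_pow_succ] at h

theorem kerIdx_dvd_general (G : Type*) [Group G] (φ : Monoid.End G)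
    (n m : ℕ) (hn : 1 ≤ n) (hnm : n ≤ m) : kerIdx φ m ∣ kerIdx φ n := by
  induction m, hnm using Nat.le_induction with
  | base => exact dvd_rfl
  | succ m hnm ih =>
    obtain ⟨k, rfl⟩ : ∃ k, m = k + 1 := ⟨m - 1, by omega⟩
    exact (kerIdx_succ_succ_dvd φ k).trans ih

theorem kerIdx_dvd (G : Type*) [Group G] [Finite G] (φ : Monoid.End G)
    (n m : ℕ) (hn : 1 ≤ n) (hnm : n ≤ m) : kerIdx φ m ∣ kerIdx φ n :=
  kerIdx_dvd_general G φ n m hn hnm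
end

section
/- Let (a_k)_{k≥1} be a sequence of positive integers such that a_m divides a_n whenever n ≤ m, and a_k = 1 for all sufficiently large k. Then there exists a finite abelian group G and a nilpotent endomorphism φ of G such that [ker^(k)(φ) : ker^(k−1)(φ)] = a_k for all k ≥ 1. -/
/-!
Take `G = ∏_{i < N} ℤ/a_{i+1}` and let `φ` move coordinate `i + 1` to coordinate `i` along an
injective map `ℤ/a_{i+2} → ℤ/a_{i+1}`, which exists because `a_{i+2} ∣ a_{i+1}`. By injectivity,
`ker φ^k` consists exactly of the elements vanishing in the coordinates `≥ k`, so consecutive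
kernels differ by the single factor `ℤ/a_k` (and not at all once `k > N`, where `a_k = 1`).
-/

theorem ZMod.exists_addMonoidHom_injective_of_dvd {m n : ℕ} (h : m ∣ n) (hn : n ≠ 0) :
    ∃ f : ZMod m →+ ZMod n, Function.Injective f := by
  obtain ⟨d, rfl⟩ := h
  have hd : (d : ℤ) ≠ 0 := by exact_mod_cast right_ne_zero_of_mul hn
  refine ⟨ZMod.lift m ⟨zmultiplesHom _ (d : ZMod (m * d)), by simp [← Nat.cast_mul]⟩,
    (ZMod.lift_injective m).mpr fun k hk ↦ ?_⟩
  rw [zmultiplesHom_apply, zsmul_eq_mul, ← Int.cast_natCast, ← Int.cast_mul,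
    ZMod.intCast_zmod_eq_zero_iff_dvd, Nat.cast_mul] at hk
  rw [ZMod.intCast_zmod_eq_zero_iff_dvd]
  exact (mul_dvd_mul_iff_right hd).mp hk

section Shift

variable {G : ℕ → Type*} [∀ i, Group (G i)] (f : ∀ i, G (i + 1) →* G i) (N : ℕ)

def shiftEnd : Monoid.End (∀ i : Fin N, G i) where
  toFun x i := if h : (i : ℕ) + 1 < N then f i (x ⟨i + 1, h⟩) else 1
  map_one' := by ext i; split_ifs <;> simp
  map_mul' x y := by ext i; by_cases h : (i : ℕ) + 1 < N <;> simp [h]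

variable {f N}

theorem shiftEnd_apply (x : ∀ i : Fin N, G i) (i : Fin N) :
    shiftEnd f N x i = if h : (i : ℕ) + 1 < N then f i (x ⟨i + 1, h⟩) else 1 :=
  rfl

theorem shiftEnd_apply_eq_one_iff (hf : ∀ i, Function.Injective (f i)) (x : ∀ i : Fin N, G i)
    (i : Fin N) : shiftEnd f N x i = 1 ↔ ∀ h : (i : ℕ) + 1 < N, x ⟨i + 1, h⟩ = 1 := by
  simp only [shiftEnd_apply, dite_eq_right_iff, map_eq_one_iff _ (hf _)]

theorem shiftEnd_pow_apply_eq_one_iff (hf : ∀ i, Function.Injective (f i)) (k : ℕ)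
    (x : ∀ i : Fin N, G i) :
    (shiftEnd f N ^ k) x = 1 ↔ ∀ i : Fin N, k ≤ (i : ℕ) → x i = 1 := by
  induction k generalizing x with
  | zero => simp [funext_iff]
  | succ k ih =>
    rw [Monoid.End.coe_pow, Function.iterate_succ_apply, ← Monoid.End.coe_pow, ih]
    simp only [shiftEnd_apply_eq_one_iff hf]
    constructor
    · rintro h ⟨_ | j, hj⟩ hkj
      · simp at hkj
      · exact h ⟨j, by omega⟩ (by simpa using hkj) hj
    · exact fun h i hi _ ↦ h _ (by simpa)

theorem mem_ker_shiftEnd_pow_iff (hf : ∀ i, Function.Injective (f i)) (k : ℕ)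
    (x : ∀ i : Fin N, G i) :
    x ∈ MonoidHom.ker (shiftEnd f N ^ k) ↔ ∀ i : Fin N, k ≤ (i : ℕ) → x i = 1 :=
  MonoidHom.mem_ker.trans (shiftEnd_pow_apply_eq_one_iff hf k x)

theorem ker_shiftEnd_pow_of_le (hf : ∀ i, Function.Injective (f i)) {k : ℕ} (hk : N ≤ k) :
    MonoidHom.ker (shiftEnd f N ^ k) = ⊤ :=
  eq_top_iff.mpr fun x _ ↦ (mem_ker_shiftEnd_pow_iff hf k x).mpr fun i hi ↦ by omega

theorem relIndex_ker_shiftEnd_pow_of_lt (hf : ∀ i, Function.Injective (f i)) {k : ℕ}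
    (hk : k < N) :
    (MonoidHom.ker (shiftEnd f N ^ k)).relIndex (MonoidHom.ker (shiftEnd f N ^ (k + 1))) =
      Nat.card (G k) := by
  set K := MonoidHom.ker (shiftEnd f N ^ (k + 1))
  let π := Pi.evalMonoidHom (fun i : Fin N ↦ G i) ⟨k, hk⟩
  -- inside `K`, lying in the smaller kernel only constrains the `k`-th coordinate
  have hker : (MonoidHom.ker (shiftEnd f N ^ k)).subgroupOf K = π.ker.subgroupOf K := by
    refine Subgroup.subgroupOf_inj.mpr (SetLike.ext fun x ↦ ?_)
    simp only [Subgroup.mem_inf, mem_ker_shiftEnd_pow_iff hf, K, MonoidHom.mem_ker, π,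
      Pi.evalMonoidHom_apply]
    constructor
    · exact fun ⟨h, hK⟩ ↦ ⟨h _ le_rfl, hK⟩
    · refine fun ⟨h, hK⟩ ↦ ⟨fun i hi ↦ ?_, hK⟩
      obtain hi | hi := hi.eq_or_lt
      · exact (Fin.ext hi.symm : i = ⟨k, hk⟩) ▸ h
      · exact hK i hi
  have hπ : K.map π = ⊤ := by
    refine eq_top_iff.mpr fun y _ ↦ ⟨Pi.mulSingle ⟨k, hk⟩ y, ?_, by simp [π]⟩
    refine (mem_ker_shiftEnd_pow_iff hf _ _).mpr fun i hi ↦ Pi.mulSingle_eq_of_ne ?_ _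
    rintro rfl
    simp at hi
  rw [Subgroup.relIndex, hker, ← Subgroup.relIndex, Subgroup.relIndex_ker, hπ, Subgroup.card_top]

theorem relIndex_ker_shiftEnd_pow_succ (hf : ∀ i, Function.Injective (f i)) (k : ℕ) :
    (MonoidHom.ker (shiftEnd f N ^ k)).relIndex (MonoidHom.ker (shiftEnd f N ^ (k + 1))) =
      if k < N then Nat.card (G k) else 1 := by
  split_ifs with hk
  · exact relIndex_ker_shiftEnd_pow_of_lt hf hk
  · rw [ker_shiftEnd_pow_of_le hf (not_lt.mp hk), ker_shiftEnd_pow_of_le hf (by omega),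
      Subgroup.relIndex_self]

end Shift

theorem realization_of_kernel_index_sequences (a : ℕ → ℕ)
    (hpos : ∀ k ≥ 1, 0 < a k)
    (hdvd : ∀ n m : ℕ, 1 ≤ n → n ≤ m → a m ∣ a n)
    (hev : ∃ N : ℕ, ∀ k ≥ N, a k = 1) :
    ∃ (G : Type) (_ : CommGroup G) (_ : Finite G) (φ : Monoid.End G),
      (∃ n ≥ 1, ∀ g : G, (φ ^ n) g = 1) ∧
      ∀ k ≥ 1, (MonoidHom.ker (φ ^ (k - 1))).relIndex (MonoidHom.ker (φ ^ k)) = a k := by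
  obtain ⟨N, hN⟩ := hev
  have (i : ℕ) : NeZero (a (i + 1)) := ⟨(hpos _ i.succ_pos).ne'⟩
  choose e he using fun i ↦ ZMod.exists_addMonoidHom_injective_of_dvd
    (hdvd (i + 1) (i + 1 + 1) i.succ_pos (by omega)) (NeZero.ne (a (i + 1)))
  let G (i : ℕ) := Multiplicative (ZMod (a (i + 1)))
  let f (i : ℕ) : G (i + 1) →* G i := AddMonoidHom.toMultiplicative (e i)
  have hf (i : ℕ) : Function.Injective (f i) := he i
  refine ⟨∀ i : Fin N, G i, inferInstance, inferInstance,
    shiftEnd f N, ⟨N + 1, by omega, fun g ↦ ?_⟩, fun k hk ↦ ?_⟩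
  · exact MonoidHom.mem_ker.mp (ker_shiftEnd_pow_of_le hf N.le_succ ▸ Subgroup.mem_top g)
  obtain ⟨k, rfl⟩ := Nat.exists_eq_add_of_le' hk
  refine (relIndex_ker_shiftEnd_pow_succ hf k).trans ?_
  split_ifs with hkN
  · simp [G]
  · exact (hN _ (by omega)).symm
end
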